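/- Assume the Schrödinger-operator setup stated in the context, and let p ≥ 1 be an integer. There exist constants c₃, c₄ > 0, depending only on p, M, m, 𝐞 and C, such that for every x₀ ≥ 2 there is L₀ with the following property: for all integers L ≥ L₀, every λ ≤ −L^{−p}, and every eigenfunction ψ of the Dirichlet Schrödinger operator −d²/dx² + Ṽ on (x₀, ∞) with eigenvalue λ, one has ( ∫_{x ≥ c₃⁻¹·L^p} (|ψ(x)|² + |ψ'(x)|²) dx )^{1/2} ≤ e^{−c₄·L}·( ∫_{x₀}^{∞} |ψ(x)|² dx )^{1/2}. -/

import Mathlib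

open MeasureTheory Filter Set
open scoped ENNReal NNReal

noncomputable def Vtil (M m E : ℝ) (L : ℕ) (E1 E2 : ℝ → ℝ) (x : ℝ) : ℝ :=
  -(2 * M * m ^ 2) / x + (((L : ℝ) * ((L : ℝ) + 1) + E ^ 2 * m ^ 2) / x ^ 2) * (1 + E2 x)
    + E1 x

def IsEigenfunction (W : ℝ → ℝ) (x₀ lam : ℝ) (ψ : ℝ → ℝ) : Prop :=
  (∃ x ∈ Set.Ioi x₀, ψ x ≠ 0) ∧
  ContDiffOn ℝ 2 ψ (Set.Ioi x₀) ∧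
  (∫⁻ x in Set.Ioi x₀, ENNReal.ofReal (ψ x ^ 2)) < ⊤ ∧
  (∫⁻ x in Set.Ioi x₀, ENNReal.ofReal (deriv ψ x ^ 2)) < ⊤ ∧
  (∫⁻ x in Set.Ioi x₀, ENNReal.ofReal (deriv (deriv ψ) x ^ 2)) < ⊤ ∧
  Filter.Tendsto ψ (nhdsWithin x₀ (Set.Ioi x₀)) (nhds 0) ∧
  ∀ x ∈ Set.Ioi x₀, -deriv (deriv ψ) x + W x * ψ x = lam * ψ x

lemma decay_est {h h' h'' : ℝ → ℝ} {a c k : ℝ} (hk : 0 < k) (hac : a ≤ c)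
    (hd : ∀ x ∈ Set.Icc a c, HasDerivAt h (h' x) x)
    (hd' : ∀ x ∈ Set.Icc a c, HasDerivAt h' (h'' x) x)
    (hpos : ∀ x ∈ Set.Icc a c, 0 ≤ h x)
    (hneg : ∀ x ∈ Set.Icc a c, h' x ≤ 0)
    (hconv : ∀ x ∈ Set.Icc a c, k ^ 2 * h x ≤ h'' x) :
    h c ≤ 2 * h a * Real.exp (-(k * (c - a))) := by
  have hca : a ∈ Set.Icc a c := ⟨le_refl a, hac⟩
  have hcc : c ∈ Set.Icc a c := ⟨hac, le_refl c⟩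
  set F : ℝ → ℝ := fun x => Real.exp (k * x) * (h' x - k * h x) with hF
  have hFd : ∀ x ∈ Set.Icc a c, HasDerivAt F (Real.exp (k * x) * (h'' x - k ^ 2 * h x)) x := by
    intro x hx
    have h1 : HasDerivAt (fun y => Real.exp (k * y)) (k * Real.exp (k * x)) x := by
      exact ((Real.hasDerivAt_exp (k * x)).comp x
        ((hasDerivAt_id x).const_mul k)).congr_deriv (by simp [mul_comm])
    have h2 : HasDerivAt (fun y => h' y - k * h y) (h'' x - k * h' x) x :=
      (hd' x hx).sub ((hd x hx).const_mul k)
    refine (h1.mul h2).congr_deriv ?_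
    ring
  have hFmono : MonotoneOn F (Set.Icc a c) := by
    apply monotoneOn_of_deriv_nonneg (convex_Icc a c)
    · exact fun x hx => (hFd x hx).continuousAt.continuousWithinAt
    · intro x hx
      rw [interior_Icc] at hx
      exact ((hFd x (Ioo_subset_Icc_self hx)).differentiableAt).differentiableWithinAt
    · intro x hx
      rw [interior_Icc] at hx
      rw [(hFd x (Ioo_subset_Icc_self hx)).deriv]
      have h3 := hconv x (Ioo_subset_Icc_self hx)
      have h4 := Real.exp_pos (k * x)
      nlinarith
  set fc : ℝ := h' c - k * h c with hfcdef
  set Q : ℝ → ℝ := fun x => Real.exp (k * (c - x)) * h x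
      + (fc / (2 * k)) * Real.exp (2 * k * (c - x)) with hQ
  have hQd : ∀ x ∈ Set.Icc a c, HasDerivAt Q
      (Real.exp (k * (c - x)) * (h' x - k * h x) - fc * Real.exp (2 * k * (c - x))) x := by
    intro x hx
    have e1 : HasDerivAt (fun y => Real.exp (k * (c - y))) (-k * Real.exp (k * (c - x))) x := by
      have : HasDerivAt (fun y => k * (c - y)) (-k) x := by
        simpa using ((hasDerivAt_id x).const_sub c).const_mul k
      refine ((Real.hasDerivAt_exp (k * (c - x))).comp x this).congr_deriv ?_; ring
    have e2 : HasDerivAt (fun y => Real.exp (2 * k * (c - y)))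
        (-(2 * k) * Real.exp (2 * k * (c - x))) x := by
      have : HasDerivAt (fun y => 2 * k * (c - y)) (-(2 * k)) x := by
        simpa using ((hasDerivAt_id x).const_sub c).const_mul (2 * k)
      refine ((Real.hasDerivAt_exp (2 * k * (c - x))).comp x this).congr_deriv ?_; ring
    have := (e1.mul (hd x hx)).add (e2.const_mul (fc / (2 * k)))
    refine this.congr_deriv ?_
    field_simp
    ring
  have hQanti : AntitoneOn Q (Set.Icc a c) := by
    apply antitoneOn_of_deriv_nonpos (convex_Icc a c)
    · exact fun x hx => (hQd x hx).continuousAt.continuousWithinAt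
    · intro x hx
      rw [interior_Icc] at hx
      exact ((hQd x (Ioo_subset_Icc_self hx)).differentiableAt).differentiableWithinAt
    · intro x hx
      rw [interior_Icc] at hx
      rw [(hQd x (Ioo_subset_Icc_self hx)).deriv]
      have hFle : F x ≤ F c := hFmono (Ioo_subset_Icc_self hx) hcc (hx.2.le)
      have hmul := mul_le_mul_of_nonneg_left hFle (Real.exp_pos (k * (c - 2 * x))).le
      have id1 : Real.exp (k * (c - 2 * x)) * F x = Real.exp (k * (c - x)) * (h' x - k * h x) := by
        rw [hF]
        rw [← mul_assoc, ← Real.exp_add]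
        ring_nf
      have id2 : Real.exp (k * (c - 2 * x)) * F c = fc * Real.exp (2 * k * (c - x)) := by
        rw [hF, hfcdef]
        rw [← mul_assoc, ← Real.exp_add]
        ring_nf
      rw [id1, id2] at hmul
      linarith
  have hQle : Q c ≤ Q a := hQanti hca hcc hac
  set s : ℝ := Real.exp (k * (c - a)) with hs
  have hs1 : 1 ≤ s := Real.one_le_exp (mul_nonneg hk.le (sub_nonneg.mpr hac))
  have hQc : Q c = h c + fc / (2 * k) := by
    simp [hQ]
  have hexp2 : Real.exp (2 * k * (c - a)) = s ^ 2 := by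
    rw [hs, sq, ← Real.exp_add]; ring_nf
  have hQa : Q a = s * h a + (fc / (2 * k)) * s ^ 2 := by
    show Real.exp (k * (c - a)) * h a + (fc / (2 * k)) * Real.exp (2 * k * (c - a)) = _
    rw [hexp2, hs]
  rw [hQc, hQa] at hQle
  have hfc : fc ≤ -(k * h c) := by
    have := hneg c hcc
    rw [hfcdef]; linarith
  have hc0 : 0 ≤ h c := hpos c hcc
  have ha0 : 0 ≤ h a := hpos a hca
  have key2 : 2 * k * h c + fc ≤ 2 * k * s * h a + fc * s ^ 2 := by
    have := mul_le_mul_of_nonneg_left hQle (by positivity : (0:ℝ) ≤ 2 * k)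
    field_simp at this
    nlinarith [this]
  have hflip : fc * (1 - s ^ 2) ≥ (-(k * h c)) * (1 - s ^ 2) := by
    apply mul_le_mul_of_nonpos_right hfc
    nlinarith
  have hmain : h c * s ≤ 2 * h a := by
    nlinarith [mul_pos hk (lt_of_lt_of_le one_pos hs1), mul_nonneg hk.le hc0,
      mul_nonneg (mul_nonneg hk.le hc0) (sub_nonneg.mpr hs1)]
  rw [Real.exp_neg, ← hs]
  have hspos : 0 < s := lt_of_lt_of_le one_pos hs1
  rw [mul_comm (2 * h a) s⁻¹, ← div_eq_inv_mul]
  rw [le_div_iff₀ hspos]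
  linarith [hmain]

set_option maxHeartbeats 1000000 in
theorem statement10 (M m E C : ℝ) (hM : 0 < M) (hm : 0 < m) (hC : 0 < C)
    (p : ℕ) (hp : 1 ≤ p) :
    ∃ c₃ c₄ : ℝ, 0 < c₃ ∧ 0 < c₄ ∧
    ∀ x₀ : ℝ, 2 ≤ x₀ → ∃ L₀ : ℕ, ∀ L : ℕ, L₀ ≤ L →
    ∀ E1 E2 : ℝ → ℝ,
      (∀ x : ℝ, x₀ < x → |E1 x| ≤ C * Real.log x / x ^ 2) →
      (∀ x : ℝ, x₀ < x → |E2 x| ≤ min (1 / 10) (C * Real.log x / x)) →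
    ∀ lam : ℝ, lam ≤ -((L : ℝ) ^ p)⁻¹ →
    ∀ ψ : ℝ → ℝ, IsEigenfunction (Vtil M m E L E1 E2) x₀ lam ψ →
    (∫⁻ x in Set.Ioi x₀ ∩ Set.Ici (c₃⁻¹ * (L : ℝ) ^ p),
        ENNReal.ofReal (ψ x ^ 2 + deriv ψ x ^ 2)) ^ ((1 : ℝ) / 2)
      ≤ ENNReal.ofReal (Real.exp (-(c₄ * (L : ℝ)))) *
        (∫⁻ x in Set.Ioi x₀, ENNReal.ofReal (ψ x ^ 2)) ^ ((1 : ℝ) / 2) := by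
  set A : ℝ := 10 * (M * m ^ 2 + C + 1) with hAdef
  have hMm : 0 < M * m ^ 2 := by positivity
  have hA10 : 10 ≤ A := by nlinarith
  have hApos : 0 < A := by linarith
  refine ⟨(2 * A)⁻¹, 1 / 8, by positivity, by norm_num, ?_⟩
  intro x₀ hx₀
  have htend : Tendsto (fun L : ℕ => (L : ℝ) ^ p * Real.exp (-((L : ℝ) / 4))) atTop (nhds 0) := by
    have t0 := Real.tendsto_pow_mul_exp_neg_atTop_nhds_zero p
    have t1 : Tendsto (fun L : ℕ => ((L : ℝ) / 4)) atTop atTop :=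
      tendsto_natCast_atTop_atTop.atTop_div_const (by norm_num)
    have t2 := (t0.comp t1).const_mul ((4 : ℝ) ^ p)
    simp only [mul_zero] at t2
    convert t2 using 2 with L
    simp only [Function.comp]
    rw [div_pow]
    field_simp
  have hev : ∀ᶠ L : ℕ in atTop, (L : ℝ) ^ p * Real.exp (-((L : ℝ) / 4)) < 1 / 6 :=
    htend.eventually_lt_const (by norm_num)
  obtain ⟨N1, hN1⟩ := eventually_atTop.mp hev
  refine ⟨max N1 (⌈x₀⌉₊ + 4), ?_⟩
  intro L hL E1 E2 hE1 hE2 lam hlam ψ hψ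
  obtain ⟨-, hC2, hL2, -, -, -, hode⟩ := hψ
  have hLN : (⌈x₀⌉₊ + 4 : ℕ) ≤ L := le_trans (le_max_right _ _) hL
  have hLx : x₀ + 4 ≤ (L : ℝ) := by
    have h1 : ((⌈x₀⌉₊ + 4 : ℕ) : ℝ) ≤ (L : ℝ) := by exact_mod_cast hLN
    have h2 : x₀ ≤ (⌈x₀⌉₊ : ℝ) := Nat.le_ceil x₀
    push_cast at h1
    linarith
  have hL1 : (1 : ℝ) ≤ (L : ℝ) := by linarith
  set Lp : ℝ := (L : ℝ) ^ p with hLpdef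
  have hLp1 : (1 : ℝ) ≤ Lp := one_le_pow₀ hL1
  have hLpL : (L : ℝ) ≤ Lp := le_self_pow₀ hL1 (by omega)
  have hLppos : 0 < Lp := by linarith
  set a : ℝ := A * Lp with hadef
  set b : ℝ := 2 * A * Lp with hbdef
  have haLp : 10 * Lp ≤ a := by nlinarith
  have hab : a + 2 ≤ b - 1 - 1 := by nlinarith
  have ha6 : x₀ + 2 ≤ a - 2 := by nlinarith
  set W : ℝ → ℝ := Vtil M m E L E1 E2 with hWdef
  set kk : ℝ := (L : ℝ) / (2 * A * Lp) with hkkdef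
  have hbpos : 0 < b := by nlinarith
  have hkkpos : 0 < kk := by
    rw [hkkdef, ← hbdef]
    positivity
  have hkk1 : kk ≤ 1 := by
    rw [hkkdef, ← hbdef, div_le_one hbpos]
    nlinarith
  -- potential lower bounds
  have hWlow : ∀ x : ℝ, a - 2 ≤ x →
      (Lp⁻¹ / 2 ≤ W x - lam ∧ (x ≤ b → kk ^ 2 ≤ 2 * (W x - lam))) := by
    intro x hx
    have hx0 : x₀ < x := by linarith
    have hxge2 : (2 : ℝ) ≤ x := by linarith
    have hxpos : (0 : ℝ) < x := by linarith
    have hlog : Real.log x ≤ x := by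
      have := Real.log_le_sub_one_of_pos hxpos
      linarith
    have hE1b := hE1 x hx0
    have hE2b : |E2 x| ≤ 1 / 10 := le_trans (hE2 x hx0) (min_le_left _ _)
    have hE1low : -(C / x) ≤ E1 x := by
      have h1 : C * Real.log x / x ^ 2 ≤ C / x := by
        rw [div_le_div_iff₀ (by positivity) hxpos]
        have h3 := mul_le_mul_of_nonneg_left hlog hC.le
        nlinarith [h3, hxpos]
      have h2 := (abs_le.mp hE1b).1
      linarith
    have hE2low : -(1 / 10 : ℝ) ≤ E2 x := (abs_le.mp hE2b).1
    have hL0c : (0:ℝ) ≤ (L : ℝ) := Nat.cast_nonneg L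
    have hcent : 9 / 10 * ((L : ℝ) ^ 2 / x ^ 2) ≤
        (((L : ℝ) * ((L : ℝ) + 1) + E ^ 2 * m ^ 2) / x ^ 2) * (1 + E2 x) := by
      have h1 : (L : ℝ) ^ 2 / x ^ 2 ≤ ((L : ℝ) * ((L : ℝ) + 1) + E ^ 2 * m ^ 2) / x ^ 2 := by
        gcongr
        nlinarith [sq_nonneg (E * m)]
      have h2 : (9 : ℝ) / 10 ≤ 1 + E2 x := by linarith
      calc 9 / 10 * ((L : ℝ) ^ 2 / x ^ 2) = ((L : ℝ) ^ 2 / x ^ 2) * (9 / 10) := by ring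
        _ ≤ (((L : ℝ) * ((L : ℝ) + 1) + E ^ 2 * m ^ 2) / x ^ 2) * (1 + E2 x) := by
            apply mul_le_mul h1 h2 (by norm_num)
            positivity
    have hWge : -((2 * M * m ^ 2 + C) / x) + 9 / 10 * ((L : ℝ) ^ 2 / x ^ 2) + Lp⁻¹
        ≤ W x - lam := by
      have hWx : W x = -(2 * M * m ^ 2) / x
          + (((L : ℝ) * ((L : ℝ) + 1) + E ^ 2 * m ^ 2) / x ^ 2) * (1 + E2 x) + E1 x := rfl
      have hsplit : (2 * M * m ^ 2 + C) / x = (2 * M * m ^ 2) / x + C / x := add_div _ _ _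
      rw [hWx, neg_div]
      linarith [hcent, hE1low, hlam, hsplit]
    have hfrac : (2 * M * m ^ 2 + C) / x ≤ 2 / 5 * Lp⁻¹ := by
      have h5 : (0 : ℝ) < 5 * (M * m ^ 2 + C + 1) * Lp := by positivity
      have hax : 5 * (M * m ^ 2 + C + 1) * Lp ≤ x := by nlinarith
      have h1 : (2 * M * m ^ 2 + C) / x ≤ (2 * M * m ^ 2 + C) / (5 * (M * m ^ 2 + C + 1) * Lp) := by
        gcongr
      have h2 : (2 * M * m ^ 2 + C) / (5 * (M * m ^ 2 + C + 1) * Lp) ≤ 2 / 5 * Lp⁻¹ := by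
        have hrw : 2 / 5 * Lp⁻¹ = (2 / 5) / Lp := by ring
        rw [hrw, div_le_div_iff₀ h5 hLppos]
        nlinarith
      linarith
    have hc0 : 0 ≤ 9 / 10 * ((L : ℝ) ^ 2 / x ^ 2) := by positivity
    have hLpinv : (0:ℝ) ≤ Lp⁻¹ := by positivity
    constructor
    · linarith
    · intro hxb
      have hgx : (L : ℝ) ^ 2 / b ^ 2 ≤ (L : ℝ) ^ 2 / x ^ 2 := by
        gcongr <;> nlinarith [sq_nonneg ((L:ℝ)), hxpos]
      have hpow : kk ^ 2 = (L : ℝ) ^ 2 / b ^ 2 := by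
        rw [hkkdef, ← hbdef, div_pow]
      rw [hpow]
      linarith
  -- derivative infrastructure
  have hopen : IsOpen (Set.Ioi x₀) := isOpen_Ioi
  have hdiff1 : ∀ x ∈ Set.Ioi x₀, HasDerivAt ψ (deriv ψ x) x := by
    intro x hx
    exact (((hC2.differentiableOn (by norm_num)) x hx).differentiableAt
      (hopen.mem_nhds hx)).hasDerivAt
  have hC1' : ContDiffOn ℝ 1 (deriv ψ) (Set.Ioi x₀) :=
    hC2.deriv_of_isOpen hopen (by norm_num)
  have hdiff2 : ∀ x ∈ Set.Ioi x₀, HasDerivAt (deriv ψ) (deriv (deriv ψ) x) x := by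
    intro x hx
    exact (((hC1'.differentiableOn (by norm_num)) x hx).differentiableAt
      (hopen.mem_nhds hx)).hasDerivAt
  have hcontψ : ContinuousOn ψ (Set.Ioi x₀) := hC2.continuousOn
  have hcontψ' : ContinuousOn (deriv ψ) (Set.Ioi x₀) := hC1'.continuousOn
  have hcontψ'' : ContinuousOn (deriv (deriv ψ)) (Set.Ioi x₀) :=
    hC1'.continuousOn_deriv_of_isOpen hopen (by norm_num)
  have hodeEq : ∀ x ∈ Set.Ioi x₀, deriv (deriv ψ) x = (W x - lam) * ψ x := by
    intro x hx
    have h := hode x hx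
    linear_combination -h
  set H : ℝ → ℝ := fun y => ψ y ^ 2 with hHdef
  set G : ℝ → ℝ := fun y => deriv ψ y ^ 2 + ψ y * deriv (deriv ψ) y with hGdef
  set H' : ℝ → ℝ := fun y => 2 * (ψ y * deriv ψ y) with hH'def
  set H'' : ℝ → ℝ := fun y => 2 * G y with hH''def
  have hHd : ∀ x ∈ Set.Ioi x₀, HasDerivAt H (H' x) x := by
    intro x hx
    have := (hdiff1 x hx).mul (hdiff1 x hx)
    have h2 : HasDerivAt (fun y => ψ y * ψ y) (H' x) x := by
      refine this.congr_deriv ?_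
      rw [hH'def]; ring
    convert h2 using 1
    funext y
    rw [hHdef]; ring
  have hH'd : ∀ x ∈ Set.Ioi x₀, HasDerivAt H' (H'' x) x := by
    intro x hx
    have := ((hdiff1 x hx).mul (hdiff2 x hx)).const_mul 2
    refine this.congr_deriv ?_
    rw [hH''def, hGdef]; ring
  have hsub : Set.Ici (a - 2) ⊆ Set.Ioi x₀ := by
    intro y hy
    simp only [Set.mem_Ici] at hy
    simp only [Set.mem_Ioi]
    linarith
  -- H' is monotone on [a-2, ∞)
  have hH'mono : MonotoneOn H' (Set.Ici (a - 2)) := by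
    apply monotoneOn_of_deriv_nonneg (convex_Ici _)
    · exact fun x hx => (hH'd x (hsub hx)).continuousAt.continuousWithinAt
    · intro x hx
      rw [interior_Ici] at hx
      exact (hH'd x (hsub (Set.mem_Ici.mpr (le_of_lt hx)))).differentiableAt.differentiableWithinAt
    · intro x hx
      rw [interior_Ici] at hx
      have hx' : a - 2 ≤ x := le_of_lt hx
      rw [(hH'd x (hsub hx')).deriv]
      have hW := (hWlow x hx').1
      have hlow : 0 < W x - lam := by
        have : (0:ℝ) < Lp⁻¹ / 2 := by positivity
        linarith
      have hox := hodeEq x (hsub hx')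
      rw [hH''def, hGdef]
      simp only []
      rw [hox]
      nlinarith [sq_nonneg (deriv ψ x), sq_nonneg (ψ x), mul_nonneg hlow.le (sq_nonneg (ψ x))]
  -- H' ≤ 0 on [a-2, ∞)
  have hH'le : ∀ x ∈ Set.Ici (a - 2), H' x ≤ 0 := by
    intro x1 hx1
    by_contra hcon
    push_neg at hcon
    have hmono2 : MonotoneOn (fun y => H y - H' x1 * y) (Set.Ici x1) := by
      apply monotoneOn_of_deriv_nonneg (convex_Ici _)
      · intro y hy
        have hy' : y ∈ Set.Ici (a - 2) := Set.mem_Ici.mpr (le_trans hx1 hy)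
        exact ((hHd y (hsub hy')).sub ((hasDerivAt_id y).const_mul (H' x1))).continuousAt.continuousWithinAt
      · intro y hy
        rw [interior_Ici] at hy
        have hy' : y ∈ Set.Ici (a - 2) := Set.mem_Ici.mpr (le_trans hx1 (le_of_lt hy))
        exact ((hHd y (hsub hy')).sub ((hasDerivAt_id y).const_mul (H' x1))).differentiableAt.differentiableWithinAt
      · intro y hy
        rw [interior_Ici] at hy
        have hy' : y ∈ Set.Ici (a - 2) := Set.mem_Ici.mpr (le_trans hx1 (le_of_lt hy))
        have hd : HasDerivAt (fun y => H y - H' x1 * y) (H' y - H' x1) y := by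
          refine ((hHd y (hsub hy')).sub ((hasDerivAt_id y).const_mul (H' x1))).congr_deriv ?_; ring
        rw [hd.deriv]
        have : H' x1 ≤ H' y := hH'mono hx1 hy' (le_of_lt hy)
        linarith
    have hgrow : ∀ y, x1 + 1 ≤ y → H' x1 ≤ H y := by
      intro y hy
      have h1 : H x1 - H' x1 * x1 ≤ H y - H' x1 * y :=
        hmono2 (Set.self_mem_Ici) (by simp only [Set.mem_Ici]; linarith) (by linarith)
      have h2 : 0 ≤ H x1 := sq_nonneg _
      nlinarith
    have hinf : (∫⁻ x in Set.Ioi x₀, ENNReal.ofReal (ψ x ^ 2)) = ⊤ := by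
      have hsub2 : Set.Ioi (x1 + 1) ⊆ Set.Ioi x₀ := by
        intro y hy
        simp only [Set.mem_Ioi] at *
        have := hx1
        simp only [Set.mem_Ici] at this
        linarith
      refine top_le_iff.mp ?_
      calc (⊤ : ℝ≥0∞) = ENNReal.ofReal (H' x1) * volume (Set.Ioi (x1 + 1)) := by
            rw [Real.volume_Ioi, ENNReal.mul_top]
            simp only [ne_eq, ENNReal.ofReal_eq_zero, not_le]
            exact hcon
        _ = ∫⁻ _ in Set.Ioi (x1 + 1), ENNReal.ofReal (H' x1) := by
            rw [setLIntegral_const]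
        _ ≤ ∫⁻ x in Set.Ioi (x1 + 1), ENNReal.ofReal (ψ x ^ 2) := by
            apply lintegral_mono_ae
            rw [ae_restrict_iff' measurableSet_Ioi]
            filter_upwards with y hy
            apply ENNReal.ofReal_le_ofReal
            exact hgrow y (le_of_lt hy)
        _ ≤ ∫⁻ x in Set.Ioi x₀, ENNReal.ofReal (ψ x ^ 2) := lintegral_mono_set hsub2
    rw [hinf] at hL2
    exact absurd hL2 (lt_irrefl ⊤)
  -- H is antitone on [a-2, ∞)
  have hHanti : AntitoneOn H (Set.Ici (a - 2)) := by
    apply antitoneOn_of_deriv_nonpos (convex_Ici _)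
    · exact fun x hx => (hHd x (hsub hx)).continuousAt.continuousWithinAt
    · intro x hx
      rw [interior_Ici] at hx
      exact (hHd x (hsub (Set.mem_Ici.mpr (le_of_lt hx)))).differentiableAt.differentiableWithinAt
    · intro x hx
      rw [interior_Ici] at hx
      rw [(hHd x (hsub (Set.mem_Ici.mpr (le_of_lt hx)))).deriv]
      exact hH'le x (Set.mem_Ici.mpr (le_of_lt hx))
  -- exponential decay up to b - 1
  have hIccsub : Set.Icc a (b - 1) ⊆ Set.Ici (a - 2) := by
    intro y hy
    simp only [Set.mem_Ici]
    linarith [hy.1]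
  have hdecay : H (b - 1) ≤ 2 * H a * Real.exp (-(kk * (b - 1 - a))) := by
    apply decay_est hkkpos (by linarith : a ≤ b - 1)
    · exact fun x hx => hHd x (hsub (hIccsub hx))
    · exact fun x hx => hH'd x (hsub (hIccsub hx))
    · exact fun x hx => sq_nonneg _
    · exact fun x hx => hH'le x (hIccsub hx)
    · intro x hx
      have hx' : a - 2 ≤ x := hIccsub hx
      have hW2 := (hWlow x hx').2 (by linarith [hx.2])
      have hox := hodeEq x (hsub hx')
      rw [hH''def, hGdef]
      simp only []
      rw [hox]
      have hHx : H x = ψ x ^ 2 := rfl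
      rw [hHx]
      nlinarith [sq_nonneg (deriv ψ x), sq_nonneg (ψ x),
        mul_le_mul_of_nonneg_right hW2 (sq_nonneg (ψ x))]
  -- MVT: -H'(b) ≤ H(b-1)
  have hMVT : -(H' b) ≤ H (b - 1) := by
    have hblt : b - 1 < b := by linarith
    obtain ⟨ξ, hξ, hslope⟩ := exists_hasDerivAt_eq_slope H H' hblt
      (fun x hx => (hHd x (hsub (by simp only [Set.mem_Ici]; linarith [hx.1]))).continuousAt.continuousWithinAt)
      (fun x hx => hHd x (hsub (by simp only [Set.mem_Ici]; linarith [hx.1.le])))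
    have hsimp : H b - H (b - 1) = H' ξ := by
      rw [hslope, sub_sub_cancel, div_one]
    have hξmem : ξ ∈ Set.Ici (a - 2) := by
      simp only [Set.mem_Ici]
      linarith [hξ.1]
    have hle : H' ξ ≤ H' b := hH'mono hξmem (by simp only [Set.mem_Ici]; linarith) (le_of_lt hξ.2)
    have hHb : 0 ≤ H b := sq_nonneg _
    linarith
    -- tail integral bound on finite pieces
  have hIccb : ∀ R : ℝ, b ≤ R → Set.Icc b R ⊆ Set.Ioi x₀ := by
    intro R hR y hy
    simp only [Set.mem_Ioi]
    have := hy.1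
    linarith
  have hcontF0 : ContinuousOn (fun x => ψ x ^ 2 + deriv ψ x ^ 2) (Set.Ioi x₀) :=
    (hcontψ.pow 2).add (hcontψ'.pow 2)
  have htail : ∀ n : ℕ, (∫⁻ x in Set.Ioc b (b + (n : ℝ) + 1),
      ENNReal.ofReal (ψ x ^ 2 + deriv ψ x ^ 2)) ≤ ENNReal.ofReal (Lp * H (b - 1)) := by
    intro n
    set R : ℝ := b + (n : ℝ) + 1 with hRdef
    have hn0 : (0 : ℝ) ≤ (n : ℝ) := Nat.cast_nonneg n
    have hbR : b ≤ R := by rw [hRdef]; linarith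
    have hsubIcc : Set.Icc b R ⊆ Set.Ioi x₀ := hIccb R hbR
    have hcontG : ContinuousOn G (Set.Icc b R) :=
      ((hcontψ'.mono hsubIcc).pow 2).add ((hcontψ.mono hsubIcc).mul (hcontψ''.mono hsubIcc))
    have hcontF : ContinuousOn (fun x => ψ x ^ 2 + deriv ψ x ^ 2) (Set.Icc b R) :=
      hcontF0.mono hsubIcc
    have hftc : ∫ x in b..R, (2 * G x) = H' R - H' b := by
      apply intervalIntegral.integral_eq_sub_of_hasDerivAt
      · intro x hx
        rw [Set.uIcc_of_le hbR] at hx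
        exact hH'd x (hsubIcc hx)
      · apply ContinuousOn.intervalIntegrable
        rw [Set.uIcc_of_le hbR]
        exact continuousOn_const.mul hcontG
    have hH'R : H' R ≤ 0 := hH'le R (by simp only [Set.mem_Ici]; linarith)
    have hGbound : ∫ x in b..R, (ψ x ^ 2 + deriv ψ x ^ 2) ≤ Lp * H (b - 1) := by
      have hmono : ∀ x ∈ Set.Icc b R, ψ x ^ 2 + deriv ψ x ^ 2 ≤ Lp * (2 * G x) := by
        intro x hx
        have hx' : a - 2 ≤ x := by linarith [hx.1]
        have hW1 := (hWlow x hx').1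
        have hox := hodeEq x (hsubIcc hx)
        have hinv : Lp * Lp⁻¹ = 1 := mul_inv_cancel₀ (ne_of_gt hLppos)
        have hGx : G x = deriv ψ x ^ 2 + (W x - lam) * ψ x ^ 2 := by
          rw [hGdef]; simp only []; rw [hox]; ring
        rw [hGx]
        have h1 : Lp⁻¹ / 2 * ψ x ^ 2 ≤ (W x - lam) * ψ x ^ 2 :=
          mul_le_mul_of_nonneg_right hW1 (sq_nonneg _)
        have h2 : Lp * (Lp⁻¹ / 2 * ψ x ^ 2) = ψ x ^ 2 / 2 := by
          field_simp
        have h3 : ψ x ^ 2 / 2 ≤ Lp * ((W x - lam) * ψ x ^ 2) := by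
          rw [← h2]
          exact mul_le_mul_of_nonneg_left h1 (le_of_lt hLppos)
        have h4 : deriv ψ x ^ 2 ≤ Lp * deriv ψ x ^ 2 :=
          le_mul_of_one_le_left (sq_nonneg _) hLp1
        have hexp : Lp * (2 * (deriv ψ x ^ 2 + (W x - lam) * ψ x ^ 2))
            = 2 * (Lp * deriv ψ x ^ 2) + 2 * (Lp * ((W x - lam) * ψ x ^ 2)) := by ring
        rw [hexp]
        linarith [h3, h4, sq_nonneg (ψ x), sq_nonneg (deriv ψ x)]
      have hcF' : ContinuousOn (fun x => ψ x ^ 2 + deriv ψ x ^ 2) (Set.uIcc b R) := by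
        rw [Set.uIcc_of_le hbR]; exact hcontF
      have hcG' : ContinuousOn (fun x => Lp * (2 * G x)) (Set.uIcc b R) := by
        rw [Set.uIcc_of_le hbR]
        exact continuousOn_const.mul (continuousOn_const.mul hcontG)
      calc ∫ x in b..R, (ψ x ^ 2 + deriv ψ x ^ 2) ≤ ∫ x in b..R, Lp * (2 * G x) :=
            intervalIntegral.integral_mono_on hbR hcF'.intervalIntegrable
              hcG'.intervalIntegrable hmono
        _ = Lp * ∫ x in b..R, (2 * G x) := intervalIntegral.integral_const_mul _ _
        _ = Lp * (H' R - H' b) := by rw [hftc]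
        _ ≤ Lp * H (b - 1) := by
            apply mul_le_mul_of_nonneg_left _ (le_of_lt hLppos)
            linarith [hMVT, hH'R]
    have hint : IntegrableOn (fun x => ψ x ^ 2 + deriv ψ x ^ 2) (Set.Ioc b R) :=
      (hcontF.integrableOn_Icc).mono_set Set.Ioc_subset_Icc_self
    rw [← ofReal_integral_eq_lintegral_ofReal hint
      (Filter.Eventually.of_forall (fun x => by positivity))]
    apply ENNReal.ofReal_le_ofReal
    rw [← intervalIntegral.integral_of_le hbR]
    exact hGbound
  -- pass to the full tail
  have hfmeas : ∀ n : ℕ, AEMeasurable ((Set.Ioc b (b + (n : ℝ) + 1)).indicator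
      (fun x => ENNReal.ofReal (ψ x ^ 2 + deriv ψ x ^ 2))) volume := by
    intro n
    rw [aemeasurable_indicator_iff measurableSet_Ioc]
    have hn0 : (0 : ℝ) ≤ (n : ℝ) := Nat.cast_nonneg n
    have hsubIcc : Set.Ioc b (b + (n : ℝ) + 1) ⊆ Set.Ioi x₀ :=
      fun y hy => (hIccb (b + (n : ℝ) + 1) (by linarith)) (Set.Ioc_subset_Icc_self hy)
    exact ((hcontF0.mono hsubIcc).aemeasurable measurableSet_Ioc).ennreal_ofReal
  have hIoi : (∫⁻ x in Set.Ioi b, ENNReal.ofReal (ψ x ^ 2 + deriv ψ x ^ 2))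
      ≤ ENNReal.ofReal (Lp * H (b - 1)) := by
    set f : ℝ → ℝ≥0∞ := fun x => ENNReal.ofReal (ψ x ^ 2 + deriv ψ x ^ 2) with hfdef
    have hsup : ∀ x, (⨆ n : ℕ, (Set.Ioc b (b + (n : ℝ) + 1)).indicator f x)
        = (Set.Ioi b).indicator f x := by
      intro x
      apply le_antisymm
      · apply iSup_le
        intro n
        exact Set.indicator_le_indicator_of_subset (fun y hy => hy.1) (fun y => zero_le) x
      · by_cases hx : x ∈ Set.Ioi b
        · obtain ⟨n, hn⟩ := exists_nat_ge (x - b)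
          have hxmem : x ∈ Set.Ioc b (b + (n : ℝ) + 1) := ⟨hx, by linarith⟩
          calc (Set.Ioi b).indicator f x = f x := Set.indicator_of_mem hx f
            _ = (Set.Ioc b (b + (n : ℝ) + 1)).indicator f x := (Set.indicator_of_mem hxmem f).symm
            _ ≤ ⨆ n : ℕ, (Set.Ioc b (b + (n : ℝ) + 1)).indicator f x :=
                le_iSup (fun n : ℕ => (Set.Ioc b (b + (n : ℝ) + 1)).indicator f x) n
        · rw [Set.indicator_of_notMem hx]
          exact zero_le
    calc ∫⁻ x in Set.Ioi b, f x = ∫⁻ x, (Set.Ioi b).indicator f x :=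
          (lintegral_indicator measurableSet_Ioi f).symm
      _ = ∫⁻ x, ⨆ n : ℕ, (Set.Ioc b (b + (n : ℝ) + 1)).indicator f x :=
          lintegral_congr (fun x => (hsup x).symm)
      _ = ⨆ n : ℕ, ∫⁻ x, (Set.Ioc b (b + (n : ℝ) + 1)).indicator f x := by
          apply lintegral_iSup' hfmeas
          apply Filter.Eventually.of_forall
          intro x n m hnm
          refine Set.indicator_le_indicator_of_subset
            (Set.Ioc_subset_Ioc_right ?_) (fun y => zero_le) x
          have : (n : ℝ) ≤ (m : ℝ) := Nat.cast_le.mpr hnm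
          linarith
      _ = ⨆ n : ℕ, ∫⁻ x in Set.Ioc b (b + (n : ℝ) + 1), f x :=
          iSup_congr (fun n => lintegral_indicator measurableSet_Ioc f)
      _ ≤ ENNReal.ofReal (Lp * H (b - 1)) := iSup_le htail
  -- front bound: H a is controlled by the L² norm
  have hfz : ENNReal.ofReal (H a) ≤ ∫⁻ x in Set.Ioi x₀, ENNReal.ofReal (ψ x ^ 2) := by
    have hvol : volume (Set.Ioc (a - 1) a) = 1 := by
      rw [Real.volume_Ioc]
      norm_num
    have h1 : ENNReal.ofReal (H a) = ∫⁻ _ in Set.Ioc (a - 1) a, ENNReal.ofReal (H a) := by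
      rw [setLIntegral_const, hvol, mul_one]
    rw [h1]
    calc ∫⁻ _ in Set.Ioc (a - 1) a, ENNReal.ofReal (H a)
        ≤ ∫⁻ x in Set.Ioc (a - 1) a, ENNReal.ofReal (ψ x ^ 2) := by
          apply lintegral_mono_ae
          rw [ae_restrict_iff' measurableSet_Ioc]
          filter_upwards with y hy
          apply ENNReal.ofReal_le_ofReal
          exact hHanti (by simp only [Set.mem_Ici]; linarith [hy.1])
            (by simp only [Set.mem_Ici]; linarith) hy.2
      _ ≤ ∫⁻ x in Set.Ioi x₀, ENNReal.ofReal (ψ x ^ 2) := by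
          apply lintegral_mono_set
          intro y hy
          simp only [Set.mem_Ioi]
          linarith [hy.1]
  -- numeric estimate
  have hHa0 : 0 ≤ H a := sq_nonneg _
  have hba2 : b - 1 - a = A * Lp - 1 := by rw [hbdef, hadef]; ring
  have hkkA : kk * (b - 1 - a) = (L : ℝ) / 2 - kk := by
    rw [hba2, hkkdef]
    field_simp
  have hexpb : Real.exp (-(kk * (b - 1 - a))) ≤ Real.exp 1 * Real.exp (-((L : ℝ) / 2)) := by
    rw [← Real.exp_add]
    apply Real.exp_le_exp.mpr
    rw [hkkA]
    linarith [hkk1]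
  have hN1L := hN1 L (le_trans (le_max_left _ _) hL)
  have he3 : Real.exp 1 ≤ 3 := by linarith [Real.exp_one_lt_d9]
  have hsplit2 : Real.exp (-((L : ℝ) / 2))
      = Real.exp (-((L : ℝ) / 4)) * Real.exp (-((L : ℝ) / 4)) := by
    rw [← Real.exp_add]; ring_nf
  have hreal : Lp * H (b - 1) ≤ Real.exp (-((L : ℝ) / 4)) * H a := by
    have h1 : Lp * H (b - 1) ≤ Lp * (2 * H a * Real.exp (-(kk * (b - 1 - a)))) :=
      mul_le_mul_of_nonneg_left hdecay (le_of_lt hLppos)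
    have h2 : Lp * (2 * H a * Real.exp (-(kk * (b - 1 - a))))
        ≤ Lp * (2 * H a * (Real.exp 1 * Real.exp (-((L : ℝ) / 2)))) := by
      apply mul_le_mul_of_nonneg_left _ (le_of_lt hLppos)
      apply mul_le_mul_of_nonneg_left hexpb (by positivity)
    have h3 : Lp * (2 * H a * (Real.exp 1 * Real.exp (-((L : ℝ) / 2))))
        = (Lp * Real.exp (-((L : ℝ) / 4))) * (2 * Real.exp 1)
          * (H a * Real.exp (-((L : ℝ) / 4))) := by
      rw [hsplit2]; ring
    have h4 : (Lp * Real.exp (-((L : ℝ) / 4))) * (2 * Real.exp 1)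
          * (H a * Real.exp (-((L : ℝ) / 4)))
        ≤ (1 / 6) * 6 * (H a * Real.exp (-((L : ℝ) / 4))) := by
      apply mul_le_mul _ le_rfl (by positivity) (by norm_num)
      apply mul_le_mul (le_of_lt hN1L) (by linarith) (by positivity) (by norm_num)
    have h5 : (1 / 6 : ℝ) * 6 * (H a * Real.exp (-((L : ℝ) / 4)))
        = Real.exp (-((L : ℝ) / 4)) * H a := by ring
    linarith
  -- assemble
  have hIcisub : Set.Ici b ⊆ Set.Ioi x₀ := by
    intro y hy
    simp only [Set.mem_Ici] at hy
    simp only [Set.mem_Ioi]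
    linarith
  have hsetEq : Set.Ioi x₀ ∩ Set.Ici ((2 * A)⁻¹⁻¹ * Lp) = Set.Ici b := by
    rw [inv_inv]
    exact Set.inter_eq_right.mpr hIcisub
  rw [hsetEq]
  have hIciIoi : (∫⁻ x in Set.Ici b, ENNReal.ofReal (ψ x ^ 2 + deriv ψ x ^ 2))
      = ∫⁻ x in Set.Ioi b, ENNReal.ofReal (ψ x ^ 2 + deriv ψ x ^ 2) :=
    setLIntegral_congr (Filter.EventuallyEq.symm Ioi_ae_eq_Ici)
  rw [hIciIoi]
  have hfinal1 : (∫⁻ x in Set.Ioi b, ENNReal.ofReal (ψ x ^ 2 + deriv ψ x ^ 2))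
      ≤ ENNReal.ofReal (Real.exp (-((L : ℝ) / 4)))
        * ∫⁻ x in Set.Ioi x₀, ENNReal.ofReal (ψ x ^ 2) := by
    calc (∫⁻ x in Set.Ioi b, ENNReal.ofReal (ψ x ^ 2 + deriv ψ x ^ 2))
        ≤ ENNReal.ofReal (Lp * H (b - 1)) := hIoi
      _ ≤ ENNReal.ofReal (Real.exp (-((L : ℝ) / 4)) * H a) := ENNReal.ofReal_le_ofReal hreal
      _ = ENNReal.ofReal (Real.exp (-((L : ℝ) / 4))) * ENNReal.ofReal (H a) :=
          ENNReal.ofReal_mul (Real.exp_pos _).le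
      _ ≤ _ := mul_le_mul_right hfz _
  have hrpow := ENNReal.rpow_le_rpow hfinal1 (by norm_num : (0 : ℝ) ≤ 1 / 2)
  rw [ENNReal.mul_rpow_of_nonneg _ _ (by norm_num : (0 : ℝ) ≤ 1 / 2)] at hrpow
  have hofr : (ENNReal.ofReal (Real.exp (-((L : ℝ) / 4)))) ^ ((1 : ℝ) / 2)
      = ENNReal.ofReal (Real.exp (-(1 / 8 * (L : ℝ)))) := by
    rw [ENNReal.ofReal_rpow_of_pos (Real.exp_pos _)]
    congr 1
    rw [← Real.exp_mul]
    congr 1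
    ring
  rw [hofr] at hrpow
  exact hrpow
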